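/- Let G = K_1 ∨ (P_{ℓ₁} ∪ P_{ℓ₂} ∪ ⋯ ∪ P_{ℓ_r}) be a graph on n ≥ 5 vertices with ℓ₁, ℓ₂ ≥ 2, and let G' = K_1 ∨ (P_{ℓ₁+ℓ₂−1} ∪ P_1 ∪ ⋯ ∪ P_{ℓ_r}) be obtained by merging the two nontrivial paths. Then λ₁(G') > λ₁(G). -/

import Mathlib

open SimpleGraph Matrix

/-- Disjoint union of paths `P_{L 0}, …, P_{L (r-1)}`. -/
def pathsUnion (r : ℕ) (L : Fin r → ℕ) : SimpleGraph (Σ i, Fin (L i)) where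
  Adj x y := x.1 = y.1 ∧ ((x.2 : ℕ) + 1 = (y.2 : ℕ) ∨ (y.2 : ℕ) + 1 = (x.2 : ℕ))
  symm := ⟨by rintro x y ⟨h1, h2⟩; exact ⟨h1.symm, h2.symm⟩⟩
  loopless := ⟨by rintro x ⟨-, h | h⟩ <;> omega⟩

/-- Join of a graph with one new vertex (`K₁ ∨ F`), center `none`. -/
def cone {V : Type*} (F : SimpleGraph V) : SimpleGraph (Option V) where
  Adj x y := match x, y with
    | none, none => False
    | none, some _ => True
    | some _, none => True
    | some a, some b => F.Adj a b
  symm := ⟨by rintro (_ | a) (_ | b) h <;> simp_all <;> exact h.symm⟩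
  loopless := ⟨by rintro (_ | a) h <;> simp_all⟩

/-- Join of two graphs. -/
def gJoin {α β : Type*} (G : SimpleGraph α) (H : SimpleGraph β) : SimpleGraph (α ⊕ β) where
  Adj x y := match x, y with
    | .inl a, .inl b => G.Adj a b
    | .inr a, .inr b => H.Adj a b
    | _, _ => True
  symm := ⟨by rintro (a | a) (b | b) h <;> simp_all <;> exact h.symm⟩
  loopless := ⟨by rintro (a | a) h <;> simp_all⟩

/-- Cycle graph on `m` vertices. -/
def cycleG (m : ℕ) : SimpleGraph (Fin m) where
  Adj x y := x ≠ y ∧ (((x : ℕ) + 1) % m = (y : ℕ) ∨ ((y : ℕ) + 1) % m = (x : ℕ))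
  symm := ⟨by rintro x y ⟨h1, h2⟩; exact ⟨h1.symm, h2.symm⟩⟩
  loopless := ⟨by rintro x ⟨h, -⟩; exact h rfl⟩

/-- Real adjacency matrix of a graph. -/
noncomputable def adjMat {V : Type*} (G : SimpleGraph V) : Matrix V V ℝ :=
  letI := Classical.decRel G.Adj
  G.adjMatrix ℝ

/-- Largest adjacency eigenvalue. -/
noncomputable def maxEig {V : Type*} [Fintype V] [DecidableEq V] (G : SimpleGraph V) : ℝ :=
  sSup (spectrum ℝ (adjMat G))

/-- Smallest adjacency eigenvalue. -/
noncomputable def minEig {V : Type*} [Fintype V] [DecidableEq V] (G : SimpleGraph V) : ℝ :=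
  sInf (spectrum ℝ (adjMat G))

/-- Spread of a graph. -/
noncomputable def gspread {V : Type*} [Fintype V] [DecidableEq V] (G : SimpleGraph V) : ℝ :=
  maxEig G - minEig G

/-- Adjacency matrix of the path on `m` vertices. -/
def pathMatrix (m : ℕ) : Matrix (Fin m) (Fin m) ℝ :=
  Matrix.of fun a b => if (a : ℕ) + 1 = (b : ℕ) ∨ (b : ℕ) + 1 = (a : ℕ) then 1 else 0

/-- `H` is a minor of `G`. -/
def HasMinor {V W : Type*} (G : SimpleGraph V) (H : SimpleGraph W) : Prop :=
  ∃ B : W → Set V, (∀ w, (B w).Nonempty) ∧ (Pairwise fun a b => Disjoint (B a) (B b)) ∧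
    (∀ w, (G.induce (B w)).Connected) ∧
    (∀ ⦃a b⦄, H.Adj a b → ∃ u ∈ B a, ∃ v ∈ B b, G.Adj u v)

/-- Planarity via Wagner's theorem: no `K₅` and no `K_{3,3}` minor. -/
def IsPlanar {V : Type*} (G : SimpleGraph V) : Prop :=
  ¬ HasMinor G (⊤ : SimpleGraph (Fin 5)) ∧
  ¬ HasMinor G (completeBipartiteGraph (Fin 3) (Fin 3))

/-- Outerplanarity: no `K₄` and no `K_{2,3}` minor. -/
def IsOuterplanar {V : Type*} (G : SimpleGraph V) : Prop :=
  ¬ HasMinor G (⊤ : SimpleGraph (Fin 4)) ∧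
  ¬ HasMinor G (completeBipartiteGraph (Fin 2) (Fin 3))

/-!
Let `y` be a Perron vector of `G = K₁ ∨ (P_{ℓ₁} ∪ P_{ℓ₂} ∪ ⋯)`; it is positive because the centre
is adjacent to every other vertex. Name the two merged paths `a`, `b` so that `y` at the end
`(a, 0)` is at most `y` at the end `(b, 0)`. Moving the edge `(a, 0)(a, 1)` to `(b, 0)(a, 1)`
yields a graph isomorphic to `G'`: path `a` minus its end, read backwards, is glued to path `b`,
and `(a, 0)` becomes the new `P₁`. This raises the Rayleigh quotient of `y` by
`2 (y(b, 0) - y(a, 0)) y(a, 1) ≥ 0`, so `λ₁(G') ≥ λ₁(G)`. Equality would make `y` an eigenvector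
of `G'` as well, which fails in the row of `(a, 0)`: that vertex lost the neighbour `(a, 1)`.
-/

section Spectral

variable {V : Type*} (G : SimpleGraph V)

open Classical in
lemma adjMat_apply (u v : V) : adjMat G u v = if G.Adj u v then 1 else 0 := rfl

lemma adjMat_nonneg (u v : V) : 0 ≤ adjMat G u v := by
  classical
  rw [adjMat_apply]
  split_ifs <;> norm_num

lemma adjMat_isHermitian : (adjMat G).IsHermitian := by
  classical
  exact G.isHermitian_adjMatrix ℝ

open Matrix in
lemma adjMat_deleteEdges_sup_edge [DecidableEq V] {u v w : V} (huw : G.Adj u w)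
    (hvw : ¬ G.Adj v w) (hne : v ≠ w) :
    adjMat (G.deleteEdges {s(u, w)} ⊔ edge v w) =
      adjMat G - (single u w 1 + single w u 1) + (single v w 1 + single w v 1) := by
  classical
  ext x y
  simp only [adjMat_apply, Matrix.add_apply, Matrix.sub_apply, single_apply, sup_adj,
    deleteEdges_adj, edge_adj, Set.mem_singleton_iff, Sym2.eq_iff]
  have huw_ne := G.ne_of_adj huw
  have hwu := G.adj_symm huw
  have hwv : ¬ G.Adj w v := fun h => hvw h.symm
  by_cases hxy : G.Adj x y <;> split_ifs <;> grind

variable [Fintype V] [DecidableEq V]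

lemma le_maxEig {μ : ℝ} (hμ : μ ∈ spectrum ℝ (adjMat G)) : μ ≤ maxEig G :=
  le_csSup Matrix.finite_real_spectrum.bddAbove hμ

lemma maxEig_mem_spectrum [Nonempty V] : maxEig G ∈ spectrum ℝ (adjMat G) := by
  obtain ⟨i⟩ := ‹Nonempty V›
  exact Set.Nonempty.csSup_mem ⟨_, (adjMat_isHermitian G).eigenvalues_mem_spectrum_real i⟩
    Matrix.finite_real_spectrum

lemma maxEig_congr {W : Type*} [Fintype W] [DecidableEq W] {H : SimpleGraph W} (e : G ≃g H) :
    maxEig G = maxEig H := by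
  classical
  have h : Matrix.reindexAlgEquiv ℝ ℝ e.toEquiv (adjMat G) = adjMat H := by
    rw [Matrix.coe_reindexAlgEquiv]
    exact e.reindex_adjMatrix ℝ
  rw [maxEig, maxEig, ← h, AlgEquiv.spectrum_eq]

open scoped MatrixOrder in
lemma posSemidef_maxEig_smul_one_sub_adjMat : (maxEig G • 1 - adjMat G).PosSemidef := by
  have h := (le_algebraMap_iff_spectrum_le (r := maxEig G)
    (adjMat_isHermitian G).isSelfAdjoint).2 fun _ => le_maxEig G
  rwa [Matrix.le_iff, Algebra.algebraMap_eq_smul_one] at h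

lemma dotProduct_maxEig_smul_one_sub_adjMat_mulVec (x : V → ℝ) :
    x ⬝ᵥ ((maxEig G • 1 - adjMat G) *ᵥ x) = maxEig G * (x ⬝ᵥ x) - x ⬝ᵥ (adjMat G *ᵥ x) := by
  simp only [Matrix.sub_mulVec, Matrix.smul_mulVec, Matrix.one_mulVec, dotProduct_sub,
    dotProduct_smul, smul_eq_mul]

lemma dotProduct_adjMat_mulVec_le (x : V → ℝ) :
    x ⬝ᵥ (adjMat G *ᵥ x) ≤ maxEig G * (x ⬝ᵥ x) := by
  have := (posSemidef_maxEig_smul_one_sub_adjMat G).dotProduct_mulVec_nonneg x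
  rw [star_trivial, dotProduct_maxEig_smul_one_sub_adjMat_mulVec] at this
  linarith

lemma adjMat_mulVec_eq_of_dotProduct_eq {x : V → ℝ}
    (hx : x ⬝ᵥ (adjMat G *ᵥ x) = maxEig G * (x ⬝ᵥ x)) : adjMat G *ᵥ x = maxEig G • x := by
  have := ((posSemidef_maxEig_smul_one_sub_adjMat G).dotProduct_mulVec_zero_iff x).1
    (by rw [star_trivial, dotProduct_maxEig_smul_one_sub_adjMat_mulVec, hx, sub_self])
  rw [Matrix.sub_mulVec, Matrix.smul_mulVec, Matrix.one_mulVec, sub_eq_zero] at this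
  exact this.symm

lemma exists_adjMat_mulVec_eq [Nonempty V] : ∃ x ≠ 0, adjMat G *ᵥ x = maxEig G • x := by
  have h := maxEig_mem_spectrum G
  rw [← Matrix.spectrum_toLin', ← Module.End.hasEigenvalue_iff_mem_spectrum] at h
  obtain ⟨x, hx⟩ := h.exists_hasEigenvector
  exact ⟨x, hx.2, by simpa using hx.apply_eq_smul⟩

lemma exists_nonneg_adjMat_mulVec_eq [Nonempty V] :
    ∃ x, 0 ≤ x ∧ x ≠ 0 ∧ adjMat G *ᵥ x = maxEig G • x := by
  obtain ⟨x, hx0, hx⟩ := exists_adjMat_mulVec_eq G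
  refine ⟨|x|, abs_nonneg x, by simpa using hx0, adjMat_mulVec_eq_of_dotProduct_eq G ?_⟩
  refine le_antisymm (dotProduct_adjMat_mulVec_le G _) ?_
  have hsq : |x| ⬝ᵥ |x| = x ⬝ᵥ x := by simp [dotProduct, abs_mul_abs_self]
  calc maxEig G * (|x| ⬝ᵥ |x|) = x ⬝ᵥ (adjMat G *ᵥ x) := by
        rw [hsq, hx, dotProduct_smul, smul_eq_mul]
    _ ≤ |x| ⬝ᵥ (adjMat G *ᵥ |x|) := by
        simp only [dotProduct, Matrix.mulVec, Finset.mul_sum, Pi.abs_apply]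
        refine Finset.sum_le_sum fun u _ => Finset.sum_le_sum fun v _ => ?_
        have := adjMat_nonneg G u v
        calc x u * (adjMat G u v * x v) = adjMat G u v * (x u * x v) := by ring
          _ ≤ adjMat G u v * (|x u| * |x v|) :=
            mul_le_mul_of_nonneg_left ((le_abs_self _).trans (abs_mul _ _).le) this
          _ = |x u| * (adjMat G u v * |x v|) := by ring

omit [DecidableEq V] in
lemma dotProduct_self_pos {x : V → ℝ} {w : V} (hw : x w ≠ 0) : 0 < x ⬝ᵥ x :=
  lt_of_lt_of_le (mul_self_pos.2 hw)
    (Finset.single_le_sum (f := fun v => x v * x v) (fun _ _ => mul_self_nonneg _)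
      (Finset.mem_univ w))

lemma dotProduct_single_mulVec (i j : V) (x : V → ℝ) :
    x ⬝ᵥ (Matrix.single i j 1 *ᵥ x) = x i * x j := by
  rw [Matrix.single_mulVec, one_mul]
  exact dotProduct_single x (x j) i

open Matrix in
theorem maxEig_lt_maxEig_deleteEdges_sup_edge {u v w : V} (huw : G.Adj u w) (hvw : ¬ G.Adj v w)
    (hne : v ≠ w) {y : V → ℝ} (hy : adjMat G *ᵥ y = maxEig G • y) (hw : 0 < y w)
    (huv : y u ≤ y v) : maxEig G < maxEig (G.deleteEdges {s(u, w)} ⊔ edge v w) := by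
  set G' := G.deleteEdges {s(u, w)} ⊔ edge v w
  have hA' : adjMat G' = _ := adjMat_deleteEdges_sup_edge G huw hvw hne
  have hquad : y ⬝ᵥ (adjMat G' *ᵥ y) = maxEig G * (y ⬝ᵥ y) + 2 * (y v - y u) * y w := by
    simp only [hA', add_mulVec, sub_mulVec, dotProduct_add, dotProduct_sub,
      dotProduct_single_mulVec, hy, dotProduct_smul, smul_eq_mul]
    ring
  have hle : maxEig G ≤ maxEig G' := by
    refine le_of_mul_le_mul_right ?_ (dotProduct_self_pos hw.ne')
    calc maxEig G * (y ⬝ᵥ y) ≤ y ⬝ᵥ (adjMat G' *ᵥ y) := by rw [hquad]; nlinarith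
      _ ≤ maxEig G' * (y ⬝ᵥ y) := dotProduct_adjMat_mulVec_le G' y
  refine hle.lt_of_ne fun heq => ?_
  have hy' : adjMat G' *ᵥ y = maxEig G' • y := by
    refine adjMat_mulVec_eq_of_dotProduct_eq G'
      (le_antisymm (dotProduct_adjMat_mulVec_le G' y) ?_)
    rw [← heq, hquad]; nlinarith
  -- in row `u`, the eigenvalue equation for `G'` has lost the term `y w`
  have hu := congrFun hy' u
  have hvu : u ≠ v := fun h => hvw (h ▸ huw)
  have hwu : u ≠ w := G.ne_of_adj huw
  simp only [hA', add_mulVec, sub_mulVec, single_mulVec, hy, Pi.add_apply, Pi.sub_apply,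
    Pi.smul_apply, smul_eq_mul, Function.update_self, Function.update_of_ne hwu,
    Function.update_of_ne hvu, Pi.zero_apply, ← heq] at hu
  linarith

end Spectral

section Cone

variable {V : Type*} (F : SimpleGraph V)

lemma cone_adj_some {p q : V} : (cone F).Adj (some p) (some q) ↔ F.Adj p q := Iff.rfl

def coneCongr {W : Type*} {F' : SimpleGraph W} (e : F ≃g F') : cone F ≃g cone F' where
  toEquiv := Equiv.optionCongr e.toEquiv
  map_rel_iff' {x y} := by
    cases x <;> cases y <;> simp [cone, e.map_adj_iff]

lemma cone_deleteEdges_sup_edge (u v w : V) :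
    cone (F.deleteEdges {s(u, w)} ⊔ edge v w) =
      (cone F).deleteEdges {s(some u, some w)} ⊔ edge (some v) (some w) := by
  ext x y
  cases x <;> cases y <;> simp [cone, edge_adj]

variable [Fintype V]

lemma adjMat_cone_mulVec_none (y : Option V → ℝ) :
    (adjMat (cone F) *ᵥ y) none = ∑ c, y (some c) := by
  classical
  simp [Matrix.mulVec, dotProduct, Fintype.sum_option, adjMat_apply, cone]

lemma le_adjMat_cone_mulVec_some {y : Option V → ℝ} (hy : 0 ≤ y) (c : V) :
    y none ≤ (adjMat (cone F) *ᵥ y) (some c) := by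
  classical
  rw [Matrix.mulVec, dotProduct, Fintype.sum_option]
  have : adjMat (cone F) (some c) none = 1 := by simp [adjMat_apply, cone]
  rw [this, one_mul, le_add_iff_nonneg_right]
  exact Finset.sum_nonneg fun d _ => mul_nonneg (adjMat_nonneg _ _ _) (hy _)

lemma exists_pos_adjMat_cone_mulVec_eq [DecidableEq V] [Nonempty V] :
    ∃ y, (∀ x, 0 < y x) ∧ adjMat (cone F) *ᵥ y = maxEig (cone F) • y := by
  obtain ⟨y, hy0, hyne, hy⟩ := exists_nonneg_adjMat_mulVec_eq (cone F)
  have hnone : 0 < y none := by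
    by_contra! hle
    have h : y none = 0 := le_antisymm hle (hy0 none)
    apply hyne
    have hsum := adjMat_cone_mulVec_none F y
    rw [hy, Pi.smul_apply, h, smul_zero, eq_comm,
      Finset.sum_eq_zero_iff_of_nonneg fun c _ => hy0 (some c)] at hsum
    funext x
    cases x with
    | none => exact h
    | some c => exact hsum c (Finset.mem_univ c)
  refine ⟨y, fun x => ?_, hy⟩
  cases x with
  | none => exact hnone
  | some c =>
    by_contra! hle
    have h : y (some c) = 0 := le_antisymm hle (hy0 (some c))
    have := le_adjMat_cone_mulVec_some F hy0 c
    rw [hy, Pi.smul_apply, h, smul_zero] at this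
    linarith

end Cone

section Labels

/- A vertex of a union of paths is labelled by (path index, position) in `ℕ × ℕ`; on labels,
adjacency and the merge are plain arithmetic. -/

def labelAdj (p q : ℕ × ℕ) : Prop := p.1 = q.1 ∧ (p.2 + 1 = q.2 ∨ q.2 + 1 = p.2)

def mergeLabel (α β ℓ : ℕ) (p : ℕ × ℕ) : ℕ × ℕ :=
  if p.1 = 0 then (if p.2 < ℓ - 1 then (α, ℓ - 1 - p.2) else (β, p.2 - (ℓ - 1)))
  else if p.1 = 1 then (α, 0) else p

variable {α β ℓ m : ℕ} (hαβ : α = 0 ∧ β = 1 ∨ α = 1 ∧ β = 0)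

include hαβ in
lemma eq_of_mergeLabel_eq {p q : ℕ × ℕ} (hp : p.1 = 1 → p.2 = 0) (hq : q.1 = 1 → q.2 = 0)
    (h : mergeLabel α β ℓ p = mergeLabel α β ℓ q) : p = q := by
  unfold mergeLabel at h
  grind

include hαβ in
lemma labelAdj_iff_mergeLabel {p q : ℕ × ℕ} (hp0 : p.1 = 0 → p.2 < ℓ + m - 1)
    (hp1 : p.1 = 1 → p.2 = 0) (hq0 : q.1 = 0 → q.2 < ℓ + m - 1) (hq1 : q.1 = 1 → q.2 = 0) :
    labelAdj p q ↔
      (labelAdj (mergeLabel α β ℓ p) (mergeLabel α β ℓ q) ∧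
        ¬(mergeLabel α β ℓ p = (α, 0) ∧ mergeLabel α β ℓ q = (α, 1) ∨
          mergeLabel α β ℓ p = (α, 1) ∧ mergeLabel α β ℓ q = (α, 0))) ∨
      ((mergeLabel α β ℓ p = (β, 0) ∧ mergeLabel α β ℓ q = (α, 1) ∨
          mergeLabel α β ℓ p = (α, 1) ∧ mergeLabel α β ℓ q = (β, 0)) ∧
        ¬mergeLabel α β ℓ p = mergeLabel α β ℓ q) := by
  obtain ⟨i, j⟩ := p
  obtain ⟨i', j'⟩ := q
  simp only [mergeLabel, labelAdj] at *
  split_ifs <;> grind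

variable {n : ℕ} {M : Fin n → ℕ}

def vertexLabel (x : Σ i, Fin (M i)) : ℕ × ℕ := (x.1, x.2)

@[simp]
lemma vertexLabel_mk (i : Fin n) (j : Fin (M i)) : vertexLabel ⟨i, j⟩ = ((i : ℕ), (j : ℕ)) := rfl

lemma vertexLabel_injective : Function.Injective (vertexLabel (M := M)) := by
  rintro ⟨i, j⟩ ⟨i', j'⟩ h
  simp only [vertexLabel_mk, Prod.mk.injEq] at h
  obtain rfl := Fin.ext h.1
  exact Sigma.ext rfl (heq_of_eq (Fin.ext h.2))

lemma pathsUnion_adj_iff {x y : Σ i, Fin (M i)} :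
    (pathsUnion n M).Adj x y ↔ labelAdj (vertexLabel x) (vertexLabel y) := by
  simp [pathsUnion, labelAdj, vertexLabel, Fin.val_inj]

end Labels

section Merge

variable {r : ℕ} (L : Fin (r + 2) → ℕ)

def mergedLengths : Fin (r + 2) → ℕ :=
  Function.update (Function.update L 0 (L 0 + L 1 - 1)) 1 1

lemma mergedLengths_apply (i : Fin (r + 2)) :
    mergedLengths L i = if i = 0 then L 0 + L 1 - 1 else if i = 1 then 1 else L i := by
  simp only [mergedLengths, Function.update_apply]
  split_ifs <;> simp_all

variable {L} {a b : Fin (r + 2)} (hab : a = 0 ∧ b = 1 ∨ a = 1 ∧ b = 0) (ha : 2 ≤ L a)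

include hab in
lemma add_eq_add_of_merge : L 0 + L 1 = L a + L b := by
  rcases hab with ⟨rfl, rfl⟩ | ⟨rfl, rfl⟩ <;> omega

include hab in
lemma val_eq_of_merge : (a : ℕ) = 0 ∧ (b : ℕ) = 1 ∨ (a : ℕ) = 1 ∧ (b : ℕ) = 0 := by
  rcases hab with ⟨rfl, rfl⟩ | ⟨rfl, rfl⟩ <;> simp

def mergeMap : (Σ i, Fin (mergedLengths L i)) → Σ i, Fin (L i)
  | ⟨i, j⟩ =>
    if h0 : i = 0 then
      if hj : (j : ℕ) < L a - 1 then ⟨a, L a - 1 - j, by omega⟩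
      else ⟨b, j - (L a - 1), by
        have hlen := mergedLengths_apply L i
        rw [if_pos h0, add_eq_add_of_merge hab] at hlen
        omega⟩
    else if h1 : i = 1 then ⟨a, 0, by omega⟩
    else ⟨i, j, by simpa [mergedLengths_apply, h0, h1] using j.isLt⟩

include hab in
lemma vertexLabel_snd_lt_of_fst_eq_zero (x : Σ i, Fin (mergedLengths L i)) :
    (vertexLabel x).1 = 0 → (vertexLabel x).2 < L a + L b - 1 := by
  obtain ⟨i, j⟩ := x
  rintro (h : (i : ℕ) = 0)
  obtain rfl := Fin.val_eq_zero_iff.1 h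
  have hlen := mergedLengths_apply L 0
  rw [if_pos rfl, add_eq_add_of_merge hab] at hlen
  have := j.isLt
  show (j : ℕ) < _
  omega

lemma vertexLabel_snd_eq_zero_of_fst_eq_one (x : Σ i, Fin (mergedLengths L i)) :
    (vertexLabel x).1 = 1 → (vertexLabel x).2 = 0 := by
  obtain ⟨i, j⟩ := x
  rintro (h : (i : ℕ) = 1)
  obtain rfl : i = 1 := by rw [Fin.ext_iff, Fin.val_one, h]
  have hlen := mergedLengths_apply L 1
  rw [if_neg (by simp), if_pos rfl] at hlen
  have := j.isLt
  show (j : ℕ) = 0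
  omega

include hab ha in
lemma card_sigma_mergedLengths :
    Fintype.card (Σ i, Fin (mergedLengths L i)) = Fintype.card (Σ i, Fin (L i)) := by
  have := add_eq_add_of_merge (L := L) hab
  simp only [Fintype.card_sigma, Fintype.card_fin, Fin.sum_univ_succ (n := r + 1),
    Fin.sum_univ_succ (n := r), mergedLengths_apply, Fin.succ_ne_zero, Fin.succ_succ_ne_one,
    if_false, if_true, Fin.succ_zero_eq_one]
  omega

variable {hab ha}

lemma vertexLabel_mergeMap (x : Σ i, Fin (mergedLengths L i)) :
    vertexLabel (mergeMap hab ha x) = mergeLabel a b (L a) (vertexLabel x) := by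
  obtain ⟨i, j⟩ := x
  have h0 : (i : ℕ) = 0 ↔ i = 0 := Fin.val_eq_zero_iff
  have h1 : (i : ℕ) = 1 ↔ i = 1 := by rw [Fin.ext_iff, Fin.val_one]
  dsimp only [mergeMap]
  by_cases hi0 : i = 0
  · by_cases hj : (j : ℕ) < L a - 1
    · rw [dif_pos hi0, dif_pos hj]; simp [mergeLabel, hi0, hj]
    · rw [dif_pos hi0, dif_neg hj]; simp [mergeLabel, hi0, hj]
  · by_cases hi1 : i = 1
    · rw [dif_neg hi0, dif_pos hi1]; simp [mergeLabel, hi1]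
    · rw [dif_neg hi0, dif_neg hi1]; simp [mergeLabel, h0, h1, hi0, hi1]

lemma mergeMap_injective : Function.Injective (mergeMap hab ha) := fun x y h =>
  vertexLabel_injective <| eq_of_mergeLabel_eq (val_eq_of_merge hab)
    (vertexLabel_snd_eq_zero_of_fst_eq_one x) (vertexLabel_snd_eq_zero_of_fst_eq_one y)
    (by simpa only [vertexLabel_mergeMap] using congrArg vertexLabel h)

lemma pathsUnion_mergedLengths_adj_iff (hb : 0 < L b) (x y : Σ i, Fin (mergedLengths L i)) :
    (pathsUnion (r + 2) (mergedLengths L)).Adj x y ↔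
      ((pathsUnion (r + 2) L).deleteEdges {s(⟨a, 0, by omega⟩, ⟨a, 1, by omega⟩)} ⊔
        edge ⟨b, 0, hb⟩ ⟨a, 1, by omega⟩).Adj (mergeMap hab ha x) (mergeMap hab ha y) := by
  simp only [sup_adj, deleteEdges_adj, edge_adj, Set.mem_singleton_iff, Sym2.eq_iff, ne_eq,
    pathsUnion_adj_iff, ← vertexLabel_injective.eq_iff, vertexLabel_mergeMap, vertexLabel_mk]
  exact labelAdj_iff_mergeLabel (val_eq_of_merge hab)
    (vertexLabel_snd_lt_of_fst_eq_zero hab x) (vertexLabel_snd_eq_zero_of_fst_eq_one x)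
    (vertexLabel_snd_lt_of_fst_eq_zero hab y) (vertexLabel_snd_eq_zero_of_fst_eq_one y)

variable (hab ha) in
noncomputable def mergeIso (hb : 0 < L b) : pathsUnion (r + 2) (mergedLengths L) ≃g
    (pathsUnion (r + 2) L).deleteEdges {s(⟨a, 0, by omega⟩, ⟨a, 1, by omega⟩)} ⊔
      edge ⟨b, 0, hb⟩ ⟨a, 1, by omega⟩ where
  toEquiv := Equiv.ofBijective (mergeMap hab ha) <|
    (Fintype.bijective_iff_injective_and_card _).2
      ⟨mergeMap_injective, card_sigma_mergedLengths hab ha⟩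
  map_rel_iff' := (pathsUnion_mergedLengths_adj_iff (hab := hab) (ha := ha) hb _ _).symm

end Merge

theorem maxEig_cone_pathsUnion_lt_mergedLengths {r : ℕ} {L : Fin (r + 2) → ℕ}
    {a b : Fin (r + 2)} (hab : a = 0 ∧ b = 1 ∨ a = 1 ∧ b = 0) (ha : 2 ≤ L a) (hb : 0 < L b)
    {y : Option (Σ i, Fin (L i)) → ℝ}
    (hy : adjMat (cone (pathsUnion (r + 2) L)) *ᵥ y = maxEig (cone (pathsUnion (r + 2) L)) • y)
    (hpos : 0 < y (some ⟨a, 1, by omega⟩))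
    (hle : y (some ⟨a, 0, by omega⟩) ≤ y (some ⟨b, 0, hb⟩)) :
    maxEig (cone (pathsUnion (r + 2) L)) <
      maxEig (cone (pathsUnion (r + 2) (mergedLengths L))) := by
  have hba : (b : ℕ) ≠ a := by rcases val_eq_of_merge hab with h | h <;> omega
  rw [maxEig_congr _ (coneCongr _ (mergeIso hab ha hb)), cone_deleteEdges_sup_edge]
  refine maxEig_lt_maxEig_deleteEdges_sup_edge _ ?_ ?_ ?_ hy hpos hle
  · exact (cone_adj_some _).2 (pathsUnion_adj_iff.2 ⟨rfl, Or.inl rfl⟩)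
  · exact fun h => hba ((pathsUnion_adj_iff.1 ((cone_adj_some _).1 h)).1)
  · exact fun h => hba (congrArg (fun x => (x.1 : ℕ)) (Option.some_injective _ h))

theorem stmt_4_general (r : ℕ) (L : Fin (r + 2) → ℕ) (h1 : 2 ≤ L 0) (h2 : 2 ≤ L 1) :
    maxEig (cone (pathsUnion (r + 2) L)) <
      maxEig (cone (pathsUnion (r + 2)
        (Function.update (Function.update L 0 (L 0 + L 1 - 1)) 1 1))) := by
  have : Nonempty (Σ i, Fin (L i)) := ⟨⟨0, 0, by omega⟩⟩
  obtain ⟨y, hpos, hy⟩ := exists_pos_adjMat_cone_mulVec_eq (pathsUnion (r + 2) L)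
  rcases le_total (y (some ⟨0, 0, by omega⟩)) (y (some ⟨1, 0, by omega⟩)) with hle | hle
  · exact maxEig_cone_pathsUnion_lt_mergedLengths (Or.inl ⟨rfl, rfl⟩) h1 (by omega) hy
      (hpos _) hle
  · exact maxEig_cone_pathsUnion_lt_mergedLengths (Or.inr ⟨rfl, rfl⟩) h2 (by omega) hy
      (hpos _) hle

theorem stmt_4 (r : ℕ) (L : Fin (r + 2) → ℕ) (h1 : 2 ≤ L 0) (h2 : 2 ≤ L 1)
    (hn : 5 ≤ 1 + ∑ i, L i) :
    maxEig (cone (pathsUnion (r + 2) L)) <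
      maxEig (cone (pathsUnion (r + 2)
        (Function.update (Function.update L 0 (L 0 + L 1 - 1)) 1 1))) :=
  stmt_4_general r L h1 h2
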